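/- Let N ≥ N₀ ≥ 1 be natural numbers, and let σ, t > 0 be real numbers with σ > (t/2)·log N. Then ∑_{n=1}^N b_n^t/n^σ ≤ ∑_{n=1}^{N₀} b_n^t/n^σ + max(N₀^{1−σ}·b_{N₀}^t, N^{1−σ}·b_N^t)·log(N/N₀), where b_n^t := exp((t/4)·log²n). -/

import Mathlib

/-- The coefficients `b_n^t = exp((t/4) log² n)`. -/
noncomputable def bcoef (t : ℝ) (n : ℕ) : ℝ :=
  Real.exp ((t / 4) * (Real.log n) ^ 2)

lemma quad_le_max (A B a c u : ℝ) (hA : 0 ≤ A) (h1 : a ≤ u) (h2 : u ≤ c) :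
    A * u ^ 2 + B * u ≤ max (A * a ^ 2 + B * a) (A * c ^ 2 + B * c) := by
  rcases le_or_gt (A * (u + a) + B) 0 with hc | hc
  · exact le_max_of_le_left (by nlinarith)
  · have h3 : 0 ≤ A * (u + c) + B := by nlinarith
    exact le_max_of_le_right (by nlinarith [mul_nonneg (sub_nonneg.mpr h2) h3])

lemma harm_sum (N₀ N : ℕ) (h1 : 1 ≤ N₀) (h : N₀ ≤ N) :
    ∑ n ∈ Finset.Ioc N₀ N, (1 : ℝ) / n ≤ Real.log N - Real.log N₀ := by
  induction N, h using Nat.le_induction with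
  | base => simp
  | succ N hNN ih =>
    rw [Finset.sum_Ioc_succ_top hNN]
    have hNpos : (0 : ℝ) < N := by exact_mod_cast lt_of_lt_of_le h1 hNN
    have hN1pos : (0 : ℝ) < (N : ℝ) + 1 := by linarith
    have key : (1 : ℝ) / (N + 1) ≤ Real.log (N + 1) - Real.log N := by
      have := Real.log_le_sub_one_of_pos (x := (N : ℝ) / (N + 1))
        (div_pos hNpos hN1pos)
      rw [Real.log_div (ne_of_gt hNpos) (ne_of_gt hN1pos)] at this
      have h2 : (N : ℝ) / (N + 1) - 1 = -(1 / (N + 1)) := by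
        field_simp
        ring
      rw [h2] at this
      linarith
    push_cast
    linarith

/-- Lemma 8.1: tail estimate for the sum `∑ b_n^t / n^σ`. -/
theorem largen_lemma (N N₀ : ℕ) (hN₀ : 1 ≤ N₀) (hN : N₀ ≤ N)
    (σ t : ℝ) (hσ : 0 < σ) (ht : 0 < t)
    (h : (t / 2) * Real.log N < σ) :
    ∑ n ∈ Finset.Icc 1 N, bcoef t n / (n : ℝ) ^ σ ≤
      (∑ n ∈ Finset.Icc 1 N₀, bcoef t n / (n : ℝ) ^ σ) +
        max ((N₀ : ℝ) ^ (1 - σ) * bcoef t N₀) ((N : ℝ) ^ (1 - σ) * bcoef t N) *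
          Real.log ((N : ℝ) / (N₀ : ℝ)) := by
  set M := max ((N₀ : ℝ) ^ (1 - σ) * bcoef t N₀) ((N : ℝ) ^ (1 - σ) * bcoef t N) with hM
  have hN₀pos : (0 : ℝ) < N₀ := by exact_mod_cast hN₀
  have hNpos : (0 : ℝ) < N := lt_of_lt_of_le hN₀pos (by exact_mod_cast hN)
  have hMpos : 0 < M := lt_max_of_lt_left
    (mul_pos (Real.rpow_pos_of_pos hN₀pos _) (Real.exp_pos _))
  -- rewrite the power-exp expression
  have hexp : ∀ m : ℕ, 0 < m → (m : ℝ) ^ (1 - σ) * bcoef t m =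
      Real.exp ((t / 4) * (Real.log m) ^ 2 + (1 - σ) * Real.log m) := by
    intro m hm
    have hmpos : (0 : ℝ) < m := by exact_mod_cast hm
    rw [bcoef, Real.rpow_def_of_pos hmpos, ← Real.exp_add]
    ring_nf
  -- pointwise bound on the tail
  have key : ∀ n ∈ Finset.Ioc N₀ N, bcoef t n / (n : ℝ) ^ σ ≤ M / n := by
    intro n hn
    rw [Finset.mem_Ioc] at hn
    have hnpos : (0 : ℝ) < n := lt_of_lt_of_le hN₀pos (by exact_mod_cast hn.1.le)
    have hla : Real.log N₀ ≤ Real.log n :=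
      Real.log_le_log hN₀pos (by exact_mod_cast hn.1.le)
    have hlc : Real.log n ≤ Real.log N :=
      Real.log_le_log hnpos (by exact_mod_cast hn.2)
    have hq := quad_le_max (t / 4) (1 - σ) (Real.log N₀) (Real.log N) (Real.log n)
      (by linarith) hla hlc
    have hbound : (n : ℝ) ^ (1 - σ) * bcoef t n ≤ M := by
      rw [hexp n (by exact_mod_cast hnpos), hM,
        hexp N₀ (by exact_mod_cast hN₀pos), hexp N (by exact_mod_cast hNpos)]
      rcases le_max_iff.mp hq with hq' | hq'
      · exact le_max_of_le_left (Real.exp_le_exp.mpr hq')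
      · exact le_max_of_le_right (Real.exp_le_exp.mpr hq')
    have heq : bcoef t n / (n : ℝ) ^ σ = ((n : ℝ) ^ (1 - σ) * bcoef t n) / n := by
      rw [Real.rpow_sub hnpos, Real.rpow_one]
      field_simp
    rw [heq]
    gcongr
  -- split the sum
  have hsplit : ∑ n ∈ Finset.Icc 1 N, bcoef t n / (n : ℝ) ^ σ =
      (∑ n ∈ Finset.Icc 1 N₀, bcoef t n / (n : ℝ) ^ σ) +
      ∑ n ∈ Finset.Ioc N₀ N, bcoef t n / (n : ℝ) ^ σ := by
    rw [show Finset.Icc 1 N = Finset.Ioc 0 N from rfl,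
      show Finset.Icc 1 N₀ = Finset.Ioc 0 N₀ from rfl,
      ← Finset.sum_Ioc_consecutive _ (Nat.zero_le N₀) hN]
  rw [hsplit]
  have htail : ∑ n ∈ Finset.Ioc N₀ N, bcoef t n / (n : ℝ) ^ σ ≤
      M * Real.log ((N : ℝ) / N₀) :=
    calc ∑ n ∈ Finset.Ioc N₀ N, bcoef t n / (n : ℝ) ^ σ
      ≤ ∑ n ∈ Finset.Ioc N₀ N, M / n := Finset.sum_le_sum key
    _ = M * ∑ n ∈ Finset.Ioc N₀ N, (1 : ℝ) / n := by
        rw [Finset.mul_sum]; congr 1; ext n; ring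
    _ ≤ M * (Real.log N - Real.log N₀) := by
        exact mul_le_mul_of_nonneg_left (harm_sum N₀ N hN₀ hN) hMpos.le
    _ = M * Real.log ((N : ℝ) / N₀) := by
        rw [Real.log_div (ne_of_gt hNpos) (ne_of_gt hN₀pos)]
  linarith
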